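/- arXiv:0809.2291 — 3 statements merged into one kernel-verified Lean document; each statement's English description precedes it below -/
import Mathlib

section
/- Let T be a locally finite face-to-face tiling of Euclidean d-space ℝ^d by convex d-polytopes, and let k be a positive integer with N_{k−1}(T) = N_k(T) < ∞. Then for any two tiles P, P' of T, the centered k-th coronas (P, C_k(P)) and (P', C_k(P')) are isomorphic if and only if the centered (k−1)-st coronas (P, C_{k−1}(P)) and (P', C_{k−1}(P')) are isomorphic. -/
noncomputable section
open scoped Classical

abbrev EucSp (d : ℕ) := EuclideanSpace ℝ (Fin d)

/-- `F` is a face of the convex set `P` (exposed face; includes `∅` and `P` itself). -/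
def IsFaceOf {d : ℕ} (F P : Set (EucSp d)) : Prop := IsExposed ℝ P F

/-- A convex `d`-polytope: the convex hull of a finite point set, with nonempty interior. -/
def IsPolytope (d : ℕ) (P : Set (EucSp d)) : Prop :=
  (∃ s : Finset (EucSp d), P = convexHull ℝ (s : Set (EucSp d))) ∧ (interior P).Nonempty

/-- Affine dimension of a set, the empty set having dimension `-1`. -/
def fdimZ {d : ℕ} (F : Set (EucSp d)) : ℤ :=
  if F = ∅ then -1 else (Module.finrank ℝ (affineSpan ℝ F).direction : ℤ)

/-- A locally finite face-to-face tiling of `ℝ^d` by convex `d`-polytopes. -/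
structure Tiling (d : ℕ) where
  tiles : Set (Set (EucSp d))
  countable : tiles.Countable
  polytope : ∀ P ∈ tiles, IsPolytope d P
  covers : ⋃₀ tiles = Set.univ
  disjointInteriors : ∀ P ∈ tiles, ∀ Q ∈ tiles, P ≠ Q → interior P ∩ interior Q = ∅
  locallyFinite : ∀ x : EucSp d, ∃ U ∈ nhds x, {P | P ∈ tiles ∧ (P ∩ U).Nonempty}.Finite
  faceToFace : ∀ P ∈ tiles, ∀ Q ∈ tiles, IsFaceOf (P ∩ Q) P ∧ IsFaceOf (P ∩ Q) Q

variable {d : ℕ}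

/-- A sequence of `n+1` tiles from `P` to `Q` in which any two consecutive tiles meet
in a face of dimension at least `d - 2`. -/
def TileChain (T : Tiling d) (P Q : Set (EucSp d)) (n : ℕ) : Prop :=
  ∃ f : ℕ → Set (EucSp d), f 0 = P ∧ f n = Q ∧ (∀ j ≤ n, f j ∈ T.tiles) ∧
    ∀ j, 1 ≤ j → j ≤ n → (d : ℤ) - 2 ≤ fdimZ (f (j - 1) ∩ f j)

/-- The distance between two tiles of `T` (`⊤` if they cannot be joined). -/
def tileDist (T : Tiling d) (P Q : Set (EucSp d)) : ℕ∞ :=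
  sInf {n : ℕ∞ | ∃ m : ℕ, n = (m : ℕ∞) ∧ TileChain T P Q m}

/-- The `k`-th corona of `P`: the set of all faces of tiles at distance at most `k` from `P`. -/
def corona (T : Tiling d) (k : ℕ) (P : Set (EucSp d)) : Set (Set (EucSp d)) :=
  {F | ∃ Q ∈ T.tiles, tileDist T P Q ≤ (k : ℕ∞) ∧ IsFaceOf F Q}

/-- The set of all faces of tiles of `T` (the face-lattice of `T`), ordered by inclusion. -/
def facesOf (T : Tiling d) : Set (Set (EucSp d)) :=
  {F | ∃ Q ∈ T.tiles, IsFaceOf F Q}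

/-- An order isomorphism between the `k`-th coronas of `P` and `P'` is an isomorphism of
centered coronas when it maps the center `P` to the center `P'`. -/
def IsCenteredIso (T : Tiling d) (k : ℕ) (P P' : Set (EucSp d))
    (e : ↥(corona T k P) ≃o ↥(corona T k P')) : Prop :=
  ∀ (hP : P ∈ corona T k P) (hP' : P' ∈ corona T k P'), e ⟨P, hP⟩ = ⟨P', hP'⟩

/-- The centered `k`-th coronas `(P, C_k(P))` and `(P', C_k(P'))` are isomorphic. -/
def CoronasIsomorphic (T : Tiling d) (k : ℕ) (P P' : Set (EucSp d)) : Prop :=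
  ∃ e : ↥(corona T k P) ≃o ↥(corona T k P'), IsCenteredIso T k P P' e

/-- `N_k(T)`: the number of isomorphism classes of centered `k`-th coronas of tiles of `T`. -/
def Ncount (T : Tiling d) (k : ℕ) : Cardinal :=
  Cardinal.mk (Quot (fun P Q : ↥T.tiles =>
    CoronasIsomorphic T k (P : Set (EucSp d)) (Q : Set (EucSp d))))

/-- Two tiles are equivalent under the combinatorial automorphism group `Γ(T)`. -/
def TilesEquiv (T : Tiling d) (P Q : Set (EucSp d)) : Prop :=
  ∃ (φ : ↥(facesOf T) ≃o ↥(facesOf T)) (hP : P ∈ facesOf T) (hQ : Q ∈ facesOf T),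
    φ ⟨P, hP⟩ = ⟨Q, hQ⟩

/-- The number of orbits of `Γ(T)` on the tiles of `T`. -/
def orbitCount (T : Tiling d) : Cardinal :=
  Cardinal.mk (Quot (fun P Q : ↥T.tiles =>
    TilesEquiv T (P : Set (EucSp d)) (Q : Set (EucSp d))))

/-- `Γ(C_{k-1}(P)) = Γ(C_k(P))`: every automorphism of the centered `(k-1)`-st corona of `P`
extends to an automorphism of the centered `k`-th corona of `P`. -/
def AutosExtend (T : Tiling d) (k : ℕ) (P : Set (EucSp d)) : Prop :=
  ∀ e : ↥(corona T (k - 1) P) ≃o ↥(corona T (k - 1) P), IsCenteredIso T (k - 1) P P e →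
    ∃ f : ↥(corona T k P) ≃o ↥(corona T k P), IsCenteredIso T k P P f ∧
      ∀ F (hF : F ∈ corona T (k - 1) P) (hF' : F ∈ corona T k P),
        ((f ⟨F, hF'⟩ : Set (EucSp d))) = ((e ⟨F, hF⟩ : Set (EucSp d)))

/-!
A centered isomorphism of `k`-th coronas restricts to one of `j`-th coronas for every `j ≤ k`.
Indeed, the tiles of a corona are its maximal elements, and two tiles `Q`, `Q'` meet in a face of
dimension at least `d - 2` iff no two faces of the corona fit strictly between `Q ∩ Q'` and `Q`:
an exposed face of a polytope of codimension at least three lies in a chain of two further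
proper exposed faces (rotate a supporting hyperplane about the face), while each strict step in
such a chain lowers the dimension. So adjacency, hence every tile chain of length `≤ j` from `P`,
is carried over to `P'`.

Consequently the partition of the tiles by `k`-th coronas refines the one by `(k-1)`-st coronas;
as both have the same finite number of classes, they coincide.
-/

open Module

lemma exists_pos_forall_mul_lt {ι : Type*} (t : Finset ι) (c δ : ι → ℝ)
    (hδ : ∀ i ∈ t, 0 < δ i) : ∃ ε > 0, ∀ i ∈ t, ε * c i < δ i := by
  have hsmall : ∀ᶠ ε in nhds (0 : ℝ), ∀ i ∈ t, ε * c i < δ i :=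
    (Filter.eventually_all_finset t).2 fun i hi =>
      ((continuous_mul_const (c i)).tendsto' 0 0 (zero_mul _)).eventually_lt_const (hδ i hi)
  obtain ⟨ε, hε, hpos⟩ :=
    ((hsmall.filter_mono nhdsWithin_le_nhds).and (self_mem_nhdsWithin (s := Set.Ioi 0))).exists
  exact ⟨ε, hpos, hε⟩

section ExposedFacesOfPolytopes

variable {E : Type*} [NormedAddCommGroup E] [NormedSpace ℝ E] {s : Finset E}
  {l h : E →L[ℝ] ℝ} {M N : ℝ} {x : E}

lemma apply_le_of_mem_convexHull (hle : ∀ a ∈ s, l a ≤ M)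
    (hx : x ∈ convexHull ℝ (s : Set E)) : l x ≤ M :=
  convexHull_min (fun a ha => hle a ha) (convex_halfSpace_le l.isLinear M) hx

lemma convexHull_filter_subset_hyperplane :
    convexHull ℝ (s.filter (l · = M) : Set E) ⊆ {x | l x = M} :=
  convexHull_min (fun _ ha => (Finset.mem_filter.1 ha).2) (convex_hyperplane l.isLinear M)

lemma mem_convexHull_filter_of_eq (hle : ∀ a ∈ s, l a ≤ M)
    (hx : x ∈ convexHull ℝ (s : Set E)) (hlx : l x = M) :
    x ∈ convexHull ℝ (s.filter (l · = M) : Set E) := by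
  obtain ⟨w, hw₀, hw₁, rfl⟩ := Finset.mem_convexHull.1 hx
  -- `M - l x = 0` is a convex combination of the gaps `M - l a ≥ 0`, so all weighted gaps vanish.
  have hgap : ∀ a ∈ s, w a * (M - l a) = 0 := by
    refine (Finset.sum_eq_zero_iff_of_nonneg fun a ha =>
      mul_nonneg (hw₀ a ha) (sub_nonneg.2 (hle a ha))).1 ?_
    have hl : l (s.centerMass w id) = ∑ a ∈ s, w a * l a := by
      simp [Finset.centerMass_eq_of_sum_1 _ _ hw₁, map_sum]
    simp only [mul_sub, Finset.sum_sub_distrib, ← Finset.sum_mul, hw₁, ← hl, hlx]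
    ring
  rw [← Finset.centerMass_filter_ne_zero]
  refine Finset.centerMass_mem_convexHull _ (fun a ha => hw₀ a (Finset.mem_of_mem_filter a ha))
    (by rw [Finset.sum_filter_ne_zero, hw₁]; exact one_pos) fun a ha => ?_
  obtain ⟨has, hwa⟩ := Finset.mem_filter.1 ha
  refine Finset.mem_coe.2 (Finset.mem_filter.2 ⟨has, ?_⟩)
  have := (mul_eq_zero.1 (hgap a has)).resolve_left hwa
  simp only [id]
  linarith

lemma convexHull_filter_eq_toExposed (hle : ∀ a ∈ s, l a ≤ M) (hM : ∃ a ∈ s, l a = M) :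
    convexHull ℝ (s.filter (l · = M) : Set E) = l.toExposed (convexHull ℝ (s : Set E)) := by
  obtain ⟨a, has, hla⟩ := hM
  ext x
  constructor
  · intro hx
    have hlx : l x = M := convexHull_filter_subset_hyperplane hx
    exact ⟨convexHull_mono (Finset.coe_subset.2 (Finset.filter_subset _ _)) hx,
      fun y hy => hlx ▸ apply_le_of_mem_convexHull hle hy⟩
  · rintro ⟨hx, hmax⟩
    refine mem_convexHull_filter_of_eq hle hx (le_antisymm (apply_le_of_mem_convexHull hle hx) ?_)
    exact hla ▸ hmax a (subset_convexHull ℝ _ has)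

lemma isExposed_convexHull_filter (hle : ∀ a ∈ s, l a ≤ M) :
    IsExposed ℝ (convexHull ℝ (s : Set E)) (convexHull ℝ (s.filter (l · = M) : Set E)) := by
  by_cases hM : ∃ a ∈ s, l a = M
  · rw [convexHull_filter_eq_toExposed hle hM]
    exact ContinuousLinearMap.toExposed.isExposed
  · push Not at hM
    rw [Finset.filter_false_of_mem hM, Finset.coe_empty, convexHull_empty]
    exact isExposed_empty

lemma isExposed_convexHull_iff {F : Set E} :
    IsExposed ℝ (convexHull ℝ (s : Set E)) F ↔
      ∃ (l : E →L[ℝ] ℝ) (M : ℝ), (∀ a ∈ s, l a ≤ M) ∧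
        F = convexHull ℝ (s.filter (l · = M) : Set E) := by
  refine ⟨fun hF => ?_, fun ⟨l, M, hle, hF⟩ => hF ▸ isExposed_convexHull_filter hle⟩
  rcases F.eq_empty_or_nonempty with rfl | hFne
  · exact ⟨0, 1, by simp, by simp⟩
  obtain ⟨l, rfl⟩ := hF hFne
  have hs : s.Nonempty := by
    simpa using (hFne.mono (Set.sep_subset _ _) : (convexHull ℝ (s : Set E)).Nonempty)
  obtain ⟨a, has, hla⟩ := Finset.exists_mem_eq_sup' hs l
  exact ⟨l, s.sup' hs l, fun b hb => Finset.le_sup' l hb,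
    (convexHull_filter_eq_toExposed (fun b hb => Finset.le_sup' l hb) ⟨a, has, hla.symm⟩).symm⟩

/-- Transitivity fails for exposed faces of general convex sets. Here, tilting the functional
exposing `G` slightly towards the one exposing `G'` inside `G` exposes `G'`. -/
lemma IsExposed.trans_convexHull {G G' : Set E} (hG : IsExposed ℝ (convexHull ℝ (s : Set E)) G)
    (hG' : IsExposed ℝ G G') : IsExposed ℝ (convexHull ℝ (s : Set E)) G' := by
  obtain ⟨l, M, hle, rfl⟩ := isExposed_convexHull_iff.1 hG
  obtain ⟨h, N, hhle, rfl⟩ := isExposed_convexHull_iff.1 hG'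
  obtain ⟨ε, hε, hεlt⟩ := exists_pos_forall_mul_lt (s.filter (l · ≠ M)) (fun a => h a - N)
    (fun a => M - l a) fun a ha => by
      obtain ⟨has, hne⟩ := Finset.mem_filter.1 ha
      exact sub_pos.2 ((hle a has).lt_of_ne hne)
  have htilt : ∀ a, (l + ε • h) a - (M + ε * N) = (l a - M) + ε * (h a - N) := fun a => by
    show l a + ε * h a - (M + ε * N) = _
    ring
  have hoff : ∀ a ∈ s, l a ≠ M → (l + ε • h) a < M + ε * N := fun a has hne => by
    have := hεlt a (Finset.mem_filter.2 ⟨has, hne⟩)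
    linarith [htilt a]
  refine isExposed_convexHull_iff.2 ⟨l + ε • h, M + ε * N, fun a has => ?_, ?_⟩
  · by_cases hla : l a = M
    · have := hhle a (Finset.mem_filter.2 ⟨has, hla⟩)
      nlinarith [htilt a]
    · exact (hoff a has hla).le
  · rw [Finset.filter_filter]
    congr 2
    refine Finset.filter_congr fun a has => ⟨fun ⟨hla, hha⟩ => ?_, fun heq => ?_⟩
    · have := htilt a
      rw [hla, hha, sub_self, sub_self, mul_zero, add_zero] at this
      linarith
    · have hla : l a = M := by_contra fun hne => (hoff a has hne).ne heq
      have := htilt a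
      rw [heq, hla, sub_self, sub_self, zero_add] at this
      exact ⟨hla, by linarith [(mul_eq_zero.1 this.symm).resolve_left hε.ne']⟩

/-- Rotate the supporting hyperplane `l = M` about its intersection with `h = N` until it
meets a further vertex on the side `N < h`; vertices on the side `h < N` are left behind. -/
lemma exists_isExposed_ssuperset_convexHull_filter (hle : ∀ a ∈ s, l a ≤ M)
    (hA : ∀ a ∈ s, l a = M → h a = N) {b c : E} (hb : b ∈ s) (hbN : N < h b) (hc : c ∈ s)
    (hcN : h c < N) :
    ∃ G, IsExposed ℝ (convexHull ℝ (s : Set E)) G ∧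
      convexHull ℝ (s.filter (l · = M) : Set E) ⊂ G ∧ c ∉ G := by
  set S := s.filter (N < h ·)
  have hS : S.Nonempty := ⟨b, Finset.mem_filter.2 ⟨hb, hbN⟩⟩
  have hltM : ∀ a ∈ S, l a < M := fun a ha => by
    obtain ⟨has, hNa⟩ := Finset.mem_filter.1 ha
    exact (hle a has).lt_of_ne fun hla => hNa.ne' (hA a has hla)
  obtain ⟨b', hb', hb't⟩ := Finset.exists_mem_eq_inf' hS fun a => (M - l a) / (h a - N)
  set t := S.inf' hS fun a => (M - l a) / (h a - N)
  obtain ⟨hb's, hNb'⟩ := Finset.mem_filter.1 hb'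
  have ht : 0 < t := (Finset.lt_inf'_iff hS).2 fun a ha =>
    div_pos (sub_pos.2 (hltM a ha)) (sub_pos.2 (Finset.mem_filter.1 ha).2)
  have htilt : ∀ a, (l + t • h) a - (M + t * N) = (l a - M) + t * (h a - N) := fun a => by
    show l a + t * h a - (M + t * N) = _
    ring
  have hle' : ∀ a ∈ s, (l + t • h) a ≤ M + t * N := fun a has => by
    rcases lt_or_ge N (h a) with hNa | haN
    · have : t ≤ (M - l a) / (h a - N) := Finset.inf'_le _ (Finset.mem_filter.2 ⟨has, hNa⟩)
      rw [le_div_iff₀ (sub_pos.2 hNa)] at this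
      linarith [htilt a]
    · nlinarith [htilt a, hle a has]
  have hb'l : (l + t • h) b' = M + t * N := by
    have : t * (h b' - N) = M - l b' := by rw [hb't, div_mul_cancel₀ _ (sub_pos.2 hNb').ne']
    linarith [htilt b']
  refine ⟨_, isExposed_convexHull_filter hle', (convexHull_mono fun a ha => ?_).ssubset_of_ne
    fun heq => ?_, fun hcG => ?_⟩
  · obtain ⟨has, hla⟩ := Finset.mem_filter.1 ha
    refine Finset.mem_filter.2 ⟨has, ?_⟩
    have := htilt a
    rw [hla, hA a has hla, sub_self, sub_self, mul_zero, add_zero] at this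
    linarith
  · have hb'G : b' ∈ convexHull ℝ (s.filter ((l + t • h) · = M + t * N) : Set E) :=
      subset_convexHull ℝ _ (Finset.mem_filter.2 ⟨hb's, hb'l⟩)
    rw [← heq] at hb'G
    exact (hltM b' hb').ne (convexHull_filter_subset_hyperplane hb'G)
  · have hcl : (l + t • h) c = M + t * N := convexHull_filter_subset_hyperplane hcG
    nlinarith [htilt c, hle c hc]

end ExposedFacesOfPolytopes

section FiniteDimensional

variable {E : Type*} [NormedAddCommGroup E] [NormedSpace ℝ E] [FiniteDimensional ℝ E]

lemma exists_clm_eq_zero_of_notMem {V : Submodule ℝ E} {x : E} (hx : x ∉ V) :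
    ∃ φ : E →L[ℝ] ℝ, (∀ v ∈ V, φ v = 0) ∧ 0 < φ x := by
  obtain ⟨f, hfx, hf⟩ := Submodule.exists_dual_map_eq_bot_of_notMem hx inferInstance
  refine ⟨(f x)⁻¹ • LinearMap.toContinuousLinearMap f, fun v hv => ?_, ?_⟩
  · have : f v ∈ V.map f := Submodule.mem_map_of_mem hv
    rw [hf, Submodule.mem_bot] at this
    simp [this]
  · simp [hfx]

lemma exists_clm_eq_zero_pos_neg {V W : Submodule ℝ E} (hVW : V ≤ W) {x y : E} (hxV : x ∉ V)
    (hxW : x ∈ W) (hyW : y ∉ W) :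
    ∃ φ : E →L[ℝ] ℝ, (∀ v ∈ V, φ v = 0) ∧ 0 < φ x ∧ φ y < 0 := by
  obtain ⟨φ₁, hφ₁V, hφ₁x⟩ := exists_clm_eq_zero_of_notMem hxV
  obtain ⟨φ₂, hφ₂W, hφ₂y⟩ := exists_clm_eq_zero_of_notMem hyW
  set t := (|φ₁ y| + 1) / φ₂ y
  have happ : ∀ z, (φ₁ - t • φ₂) z = φ₁ z - t * φ₂ z := fun _ => rfl
  refine ⟨φ₁ - t • φ₂, fun v hv => ?_, ?_, ?_⟩
  · rw [happ, hφ₁V v hv, hφ₂W v (hVW hv), mul_zero, sub_zero]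
  · rwa [happ, hφ₂W x hxW, mul_zero, sub_zero]
  · rw [happ, div_mul_cancel₀ _ hφ₂y.ne']
    linarith [le_abs_self (φ₁ y)]

lemma exists_mem_notMem_affineSpan {S T : Set E}
    (h : finrank ℝ (affineSpan ℝ S).direction < finrank ℝ (affineSpan ℝ T).direction) :
    ∃ b ∈ T, b ∉ affineSpan ℝ S := by
  by_contra! hT
  exact h.not_ge (Submodule.finrank_mono (AffineSubspace.direction_le (affineSpan_le.2 hT)))

/-- A functional exposing `A` in `B` is constant on `A` but not on `B`, so the affine span
of `A` lies in a hyperplane that does not contain `B`. -/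
lemma IsExposed.finrank_direction_lt {A B : Set E} (hAB : IsExposed ℝ B A) (hA : A.Nonempty)
    (hne : A ≠ B) :
    finrank ℝ (affineSpan ℝ A).direction < finrank ℝ (affineSpan ℝ B).direction := by
  obtain ⟨y, hyB, hyA⟩ := Set.exists_of_ssubset (hAB.subset.ssubset_of_ne hne)
  obtain ⟨a, haA⟩ := hA
  obtain ⟨l, rfl⟩ := hAB ⟨a, haA⟩
  obtain ⟨z, hzB, hyz⟩ : ∃ z ∈ B, l y < l z := by simpa [hyB] using hyA
  have hya : l y < l a := hyz.trans_le (haA.2 z hzB)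
  have hker :
      vectorSpan ℝ {x ∈ B | ∀ y ∈ B, l y ≤ l x} ≤ LinearMap.ker (l : E →ₗ[ℝ] ℝ) := by
    refine Submodule.span_le.2 ?_
    rintro _ ⟨x, hx, x', hx', rfl⟩
    simpa [sub_eq_zero] using le_antisymm (hx'.2 x hx.1) (hx.2 x' hx'.1)
  rw [direction_affineSpan, direction_affineSpan]
  refine Submodule.finrank_lt_finrank_of_lt
    ((vectorSpan_mono ℝ (Set.sep_subset _ _)).lt_of_ne fun heq => ?_)
  have : y -ᵥ a ∈ LinearMap.ker (l : E →ₗ[ℝ] ℝ) :=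
    hker (heq ▸ vsub_mem_vectorSpan ℝ hyB haA.1)
  simp [sub_eq_zero] at this
  exact hya.ne this

lemma exists_clm_forall_eq_lt_lt {F T : Set E} (hF : F.Nonempty)
    (hFT : finrank ℝ (affineSpan ℝ F).direction + 2 ≤ finrank ℝ (affineSpan ℝ T).direction) :
    ∃ (φ : E →L[ℝ] ℝ) (N : ℝ), (∀ x ∈ F, φ x = N) ∧ (∃ b ∈ T, N < φ b) ∧ ∃ c ∈ T, φ c < N := by
  obtain ⟨a, ha⟩ := hF
  obtain ⟨b, hbT, hbF⟩ := exists_mem_notMem_affineSpan (S := F) (T := T) (by omega)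
  obtain ⟨c, hcT, hcF⟩ := exists_mem_notMem_affineSpan (S := insert b F) (T := T) (by
    have := finrank_vectorSpan_insert_le_set ℝ F b
    rw [direction_affineSpan] at hFT ⊢
    omega)
  have haF : a ∈ affineSpan ℝ F := subset_affineSpan ℝ F ha
  have haF' : a ∈ affineSpan ℝ (insert b F) :=
    subset_affineSpan ℝ _ (Set.mem_insert_of_mem b ha)
  obtain ⟨φ, hφF, hφb, hφc⟩ := exists_clm_eq_zero_pos_neg
    (AffineSubspace.direction_le (affineSpan_mono ℝ (Set.subset_insert b F)))
    (mt (AffineSubspace.vsub_right_mem_direction_iff_mem haF b).1 hbF)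
    (AffineSubspace.vsub_mem_direction (subset_affineSpan ℝ _ (Set.mem_insert b F)) haF')
    (mt (AffineSubspace.vsub_right_mem_direction_iff_mem haF' c).1 hcF)
  refine ⟨φ, φ a, fun x hx => ?_, ⟨b, hbT, ?_⟩, c, hcT, ?_⟩
  · have := hφF _ (AffineSubspace.vsub_mem_direction (subset_affineSpan ℝ F hx) haF)
    rwa [vsub_eq_sub, map_sub, sub_eq_zero] at this
  · rwa [vsub_eq_sub, map_sub, sub_pos] at hφb
  · rwa [vsub_eq_sub, map_sub, sub_neg] at hφc

end FiniteDimensional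

lemma exists_clm_lt_lt_of_nontrivial {E : Type*} [NormedAddCommGroup E] [NormedSpace ℝ E]
    {T : Set E} (hT : T.Nontrivial) :
    ∃ (φ : E →L[ℝ] ℝ) (N : ℝ), (∃ b ∈ T, N < φ b) ∧ ∃ c ∈ T, φ c < N := by
  obtain ⟨x, hx, y, hy, hxy⟩ := hT
  obtain ⟨φ, hφ⟩ := SeparatingDual.exists_separating_of_ne (R := ℝ) hxy
  rcases hφ.lt_or_gt with hlt | hlt
  · exact ⟨φ, (φ x + φ y) / 2, ⟨y, hy, by linarith⟩, x, hx, by linarith⟩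
  · exact ⟨φ, (φ x + φ y) / 2, ⟨x, hx, by linarith⟩, y, hy, by linarith⟩

section Dimension

variable {A B F S : Set (EucSp d)} {s : Finset (EucSp d)}

lemma fdimZ_empty : fdimZ (∅ : Set (EucSp d)) = -1 := if_pos rfl

lemma fdimZ_of_nonempty (hS : S.Nonempty) :
    fdimZ S = finrank ℝ (affineSpan ℝ S).direction := if_neg hS.ne_empty

lemma fdimZ_convexHull (S : Set (EucSp d)) : fdimZ (convexHull ℝ S) = fdimZ S := by
  rcases S.eq_empty_or_nonempty with rfl | hS
  · rw [convexHull_empty]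
  · rw [fdimZ_of_nonempty hS, fdimZ_of_nonempty hS.convexHull, affineSpan_convexHull]

lemma IsPolytope.fdimZ_eq {P : Set (EucSp d)} (hP : IsPolytope d P) : fdimZ P = d := by
  obtain ⟨⟨s, rfl⟩, hint⟩ := hP
  rw [fdimZ_of_nonempty (hint.mono interior_subset),
    (convex_convexHull ℝ _).interior_nonempty_iff_affineSpan_eq_top.1 hint,
    AffineSubspace.direction_top, finrank_top, finrank_euclideanSpace_fin]

lemma IsExposed.fdimZ_lt (hAB : IsExposed ℝ B A) (hne : A ≠ B) : fdimZ A < fdimZ B := by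
  rcases A.eq_empty_or_nonempty with rfl | hA
  · rw [fdimZ_empty, fdimZ_of_nonempty (Set.nonempty_iff_ne_empty.2 hne.symm)]
    omega
  · rw [fdimZ_of_nonempty hA, fdimZ_of_nonempty (hA.mono hAB.subset)]
    exact_mod_cast hAB.finrank_direction_lt hA hne

lemma nontrivial_of_one_le_fdimZ (hS : 1 ≤ fdimZ S) : S.Nontrivial := by
  by_contra h
  rcases S.eq_empty_or_nonempty with rfl | hne
  · rw [fdimZ_empty] at hS
    omega
  · rw [fdimZ_of_nonempty hne, direction_affineSpan,
      (vectorSpan_eq_bot_iff_subsingleton ℝ).2 (Set.not_nontrivial_iff.1 h), finrank_bot] at hS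
    omega

lemma exists_isExposed_ssubset_ssubset (hF : IsExposed ℝ (convexHull ℝ (s : Set (EucSp d))) F)
    (hdim : fdimZ F + 2 ≤ fdimZ (convexHull ℝ (s : Set (EucSp d)))) :
    ∃ G, IsExposed ℝ (convexHull ℝ (s : Set (EucSp d))) G ∧ F ⊂ G ∧
      G ⊂ convexHull ℝ (s : Set (EucSp d)) := by
  obtain ⟨l, M, hle, rfl⟩ := isExposed_convexHull_iff.1 hF
  rw [fdimZ_convexHull, fdimZ_convexHull] at hdim
  obtain ⟨φ, N, hFN, ⟨b, hb, hbN⟩, c, hc, hcN⟩ : ∃ (φ : EucSp d →L[ℝ] ℝ) (N : ℝ),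
      (∀ a ∈ (s.filter (l · = M) : Set (EucSp d)), φ a = N) ∧
        (∃ b ∈ (s : Set (EucSp d)), N < φ b) ∧ ∃ c ∈ (s : Set (EucSp d)), φ c < N := by
    rcases (s.filter (l · = M) : Set (EucSp d)).eq_empty_or_nonempty with hF₀ | hFne
    · rw [hF₀, fdimZ_empty] at hdim
      obtain ⟨φ, N, hb, hc⟩ := exists_clm_lt_lt_of_nontrivial (nontrivial_of_one_le_fdimZ
        (by omega : 1 ≤ fdimZ (s : Set (EucSp d))))
      exact ⟨φ, N, by simp [hF₀], hb, hc⟩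
    · have hs := hFne.mono (Finset.coe_subset.2 (Finset.filter_subset _ s))
      rw [fdimZ_of_nonempty hFne, fdimZ_of_nonempty hs] at hdim
      exact exists_clm_forall_eq_lt_lt hFne (by omega)
  obtain ⟨G, hG, hFG, hcG⟩ := exists_isExposed_ssuperset_convexHull_filter hle
    (fun a ha hla => hFN a (Finset.mem_filter.2 ⟨ha, hla⟩)) hb hbN hc hcN
  exact ⟨G, hG, hFG, hG.subset.ssubset_of_ne fun hGs => hcG (hGs ▸ subset_convexHull ℝ _ hc)⟩

lemma exists_isExposed_ssubset_ssubset_ssubset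
    (hF : IsExposed ℝ (convexHull ℝ (s : Set (EucSp d))) F)
    (hdim : fdimZ F + 3 ≤ fdimZ (convexHull ℝ (s : Set (EucSp d)))) :
    ∃ G₁ G₂, IsExposed ℝ (convexHull ℝ (s : Set (EucSp d))) G₁ ∧
      IsExposed ℝ (convexHull ℝ (s : Set (EucSp d))) G₂ ∧ F ⊂ G₁ ∧ G₁ ⊂ G₂ ∧
      G₂ ⊂ convexHull ℝ (s : Set (EucSp d)) := by
  obtain ⟨G, hG, hFG, hGs⟩ := exists_isExposed_ssubset_ssubset hF (by omega)
  by_cases hGdim : fdimZ G + 2 ≤ fdimZ (convexHull ℝ (s : Set (EucSp d)))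
  · obtain ⟨G₂, hG₂, hGG₂, hG₂s⟩ := exists_isExposed_ssubset_ssubset hG hGdim
    exact ⟨G, G₂, hG, hG₂, hFG, hGG₂, hG₂s⟩
  · obtain ⟨l, M, -, rfl⟩ := isExposed_convexHull_iff.1 hG
    obtain ⟨G₁, hG₁, hFG₁, hG₁G⟩ :=
      exists_isExposed_ssubset_ssubset (hF.mono hGs.subset hFG.subset) (by omega)
    exact ⟨G₁, _, hG.trans_convexHull hG₁, hG, hFG₁, hG₁G, hGs⟩

end Dimension

section TilingBasics

variable {T : Tiling d} {P Q Q' R S F : Set (EucSp d)} {k m n : ℕ}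

lemma Tiling.eq_of_subset (hP : P ∈ T.tiles) (hQ : Q ∈ T.tiles) (hPQ : P ⊆ Q) : P = Q := by
  by_contra hne
  obtain ⟨x, hx⟩ := (T.polytope P hP).2
  exact (Set.eq_empty_iff_forall_notMem.1 (T.disjointInteriors P hP Q hQ hne)) x
    ⟨hx, interior_mono hPQ hx⟩

lemma Tiling.isFaceOf_of_subset (hS : S ∈ T.tiles) (hFS : IsFaceOf F S) (hR : R ∈ T.tiles)
    (hFR : F ⊆ R) : IsFaceOf F R := by
  obtain ⟨r, rfl⟩ := (T.polytope R hR).1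
  exact (T.faceToFace S hS _ hR).2.trans_convexHull
    (hFS.mono Set.inter_subset_left (Set.subset_inter hFS.subset hFR))

lemma TileChain.mem_tiles (hc : TileChain T P Q m) : Q ∈ T.tiles := by
  obtain ⟨f, -, rfl, hf, -⟩ := hc
  exact hf m le_rfl

lemma tileChain_zero_iff : TileChain T P Q 0 ↔ P ∈ T.tiles ∧ P = Q := by
  constructor
  · rintro ⟨f, rfl, rfl, hf, -⟩
    exact ⟨hf 0 le_rfl, rfl⟩
  · rintro ⟨hP, rfl⟩
    exact ⟨fun _ => P, rfl, rfl, fun _ _ => hP, fun j h1 h0 => by omega⟩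

lemma tileChain_succ_iff : TileChain T P Q (m + 1) ↔
    ∃ R, TileChain T P R m ∧ Q ∈ T.tiles ∧ (d : ℤ) - 2 ≤ fdimZ (R ∩ Q) := by
  constructor
  · rintro ⟨f, hf0, rfl, hf, hadj⟩
    exact ⟨f m, ⟨f, hf0, rfl, fun j hj => hf j (by omega), fun j h1 h2 => hadj j h1 (by omega)⟩,
      hf _ le_rfl, hadj (m + 1) (by omega) le_rfl⟩
  · rintro ⟨R, ⟨f, hf0, rfl, hf, hadj⟩, hQ, hRQ⟩
    refine ⟨Function.update f (m + 1) Q, by simp [hf0], by simp, fun j hj => ?_,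
      fun j h1 h2 => ?_⟩
    · rcases Nat.lt_or_ge j (m + 1) with hj' | hj'
      · rw [Function.update_of_ne (by omega)]
        exact hf j (by omega)
      · rw [show j = m + 1 by omega, Function.update_self]
        exact hQ
    · rcases Nat.lt_or_ge j (m + 1) with hj' | hj'
      · rw [Function.update_of_ne (by omega), Function.update_of_ne (by omega)]
        exact hadj j h1 (by omega)
      · obtain rfl : j = m + 1 := by omega
        rw [Function.update_of_ne (by omega), Function.update_self]
        exact hRQ

lemma tileDist_le_iff : tileDist T P Q ≤ n ↔ ∃ m ≤ n, TileChain T P Q m := by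
  constructor
  · intro h
    rcases Set.eq_empty_or_nonempty {x : ℕ∞ | ∃ m : ℕ, x = m ∧ TileChain T P Q m}
      with he | hne
    · simp [tileDist, he] at h
    · obtain ⟨m, hm, hc⟩ := csInf_mem hne
      exact ⟨m, by rw [tileDist, hm] at h; exact_mod_cast h, hc⟩
  · rintro ⟨m, hmn, hc⟩
    exact (sInf_le (show (m : ℕ∞) ∈ {x : ℕ∞ | ∃ m : ℕ, x = m ∧ TileChain T P Q m} from
      ⟨m, rfl, hc⟩)).trans (by exact_mod_cast hmn)

end TilingBasics

section Corona

variable {T : Tiling d} {P Q Q' G₁ G₂ : Set (EucSp d)} {j k m : ℕ}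

lemma self_mem_corona (hP : P ∈ T.tiles) : P ∈ corona T k P :=
  ⟨P, hP, tileDist_le_iff.2 ⟨0, Nat.zero_le _, tileChain_zero_iff.2 ⟨hP, rfl⟩⟩, IsExposed.refl P⟩

lemma corona_mono (hjk : j ≤ k) : corona T j P ⊆ corona T k P := by
  rintro F ⟨Q, hQ, hdist, hface⟩
  exact ⟨Q, hQ, hdist.trans (by exact_mod_cast hjk), hface⟩

lemma TileChain.mem_corona (hc : TileChain T P Q m) (hm : m ≤ k) : Q ∈ corona T k P :=
  ⟨Q, hc.mem_tiles, tileDist_le_iff.2 ⟨m, hm, hc⟩, IsExposed.refl Q⟩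

lemma tileDist_le_of_mem_corona (hQc : Q ∈ corona T k P) (hQ : Q ∈ T.tiles) :
    tileDist T P Q ≤ k := by
  obtain ⟨S, hS, hdist, hface⟩ := hQc
  rwa [T.eq_of_subset hQ hS hface.subset]

lemma inter_mem_corona (hQ : Q ∈ T.tiles) (hQ'c : Q' ∈ corona T k P) (hQ' : Q' ∈ T.tiles) :
    Q ∩ Q' ∈ corona T k P :=
  ⟨Q', hQ', tileDist_le_of_mem_corona hQ'c hQ', (T.faceToFace Q hQ Q' hQ').2⟩

lemma isMax_corona_iff {x : corona T k P} : IsMax x ↔ (x : Set (EucSp d)) ∈ T.tiles := by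
  obtain ⟨S, hS, hdist, hface⟩ := x.2
  constructor
  · intro hx
    have hSx : (⟨S, S, hS, hdist, IsExposed.refl S⟩ : corona T k P) ≤ x := hx hface.subset
    rwa [le_antisymm hface.subset hSx]
  · intro hx g hxg
    obtain ⟨S', hS', -, hG⟩ := g.2
    have hxS' := T.eq_of_subset hx hS' (Set.Subset.trans hxg hG.subset)
    show (g : Set (EucSp d)) ⊆ x
    rw [hxS']
    exact hG.subset

lemma Tiling.fdimZ_inter_add_three_le (hQ : Q ∈ T.tiles) (hQ' : Q' ∈ T.tiles)
    (hG₁ : IsFaceOf G₁ Q) (hG₂ : IsFaceOf G₂ Q) (h₀₁ : Q ∩ Q' ⊂ G₁) (h₁₂ : G₁ ⊂ G₂)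
    (h₂ : G₂ ⊂ Q) : fdimZ (Q ∩ Q') + 3 ≤ d := by
  have d₀ := (((T.faceToFace Q hQ Q' hQ').1).mono hG₁.subset h₀₁.subset).fdimZ_lt h₀₁.ne
  have d₁ := (hG₁.mono hG₂.subset h₁₂.subset).fdimZ_lt h₁₂.ne
  have d₂ := (hG₂ : IsExposed ℝ Q G₂).fdimZ_lt h₂.ne
  rw [(T.polytope Q hQ).fdimZ_eq] at d₂
  omega

lemma Tiling.exists_ssubset_chain_of_fdimZ_inter (hQ : Q ∈ T.tiles) (hQ' : Q' ∈ T.tiles)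
    (hdim : fdimZ (Q ∩ Q') + 3 ≤ d) :
    ∃ G₁ G₂, IsFaceOf G₁ Q ∧ IsFaceOf G₂ Q ∧ Q ∩ Q' ⊂ G₁ ∧ G₁ ⊂ G₂ ∧ G₂ ⊂ Q := by
  have hQd := (T.polytope Q hQ).fdimZ_eq
  obtain ⟨s, rfl⟩ := (T.polytope _ hQ).1
  exact exists_isExposed_ssubset_ssubset_ssubset (T.faceToFace _ hQ Q' hQ').1 (by omega)

lemma le_fdimZ_inter_iff {x y : corona T k P} (hx : (x : Set (EucSp d)) ∈ T.tiles)
    (hy : (y : Set (EucSp d)) ∈ T.tiles) (hxy : (x : Set (EucSp d)) ∩ y ∈ corona T k P) :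
    (d : ℤ) - 2 ≤ fdimZ ((x : Set (EucSp d)) ∩ y) ↔
      ¬ ∃ g₁ g₂ : corona T k P, ⟨_, hxy⟩ < g₁ ∧ g₁ < g₂ ∧ g₂ < x := by
  constructor
  · rintro hdim ⟨g₁, g₂, h₀₁, h₁₂, h₂⟩
    obtain ⟨S₁, hS₁, -, hG₁⟩ := g₁.2
    obtain ⟨S₂, hS₂, -, hG₂⟩ := g₂.2
    have := T.fdimZ_inter_add_three_le hx hy
      (T.isFaceOf_of_subset hS₁ hG₁ hx (h₁₂.le.trans h₂.le))
      (T.isFaceOf_of_subset hS₂ hG₂ hx h₂.le) h₀₁ h₁₂ h₂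
    omega
  · intro hchain
    by_contra! hdim
    obtain ⟨G₁, G₂, hG₁, hG₂, h₀₁, h₁₂, h₂⟩ :=
      T.exists_ssubset_chain_of_fdimZ_inter hx hy (by omega)
    have hxk := tileDist_le_of_mem_corona x.2 hx
    exact hchain ⟨⟨G₁, x, hx, hxk, hG₁⟩, ⟨G₂, x, hx, hxk, hG₂⟩, h₀₁, h₁₂, h₂⟩

end Corona

section CoronaIsomorphisms

lemma isGLB_pair_inter {α : Type*} {S : Set (Set α)} {x y : S} (h : (x : Set α) ∩ y ∈ S) :
    IsGLB {x, y} (⟨_, h⟩ : S) :=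
  ⟨by rintro z (rfl | rfl); exacts [Set.inter_subset_left, Set.inter_subset_right],
    fun _ hz => Set.subset_inter (hz (Set.mem_insert x {y})) (hz (Set.mem_insert_of_mem x rfl))⟩

lemma OrderIso.map_inter_of_mem {α : Type*} {S S' : Set (Set α)} (e : S ≃o S') {x y : S}
    (hxy : (x : Set α) ∩ y ∈ S) (hexy : (e x : Set α) ∩ e y ∈ S') :
    e ⟨_, hxy⟩ = ⟨_, hexy⟩ :=
  (e.isGLB_image'.2 (isGLB_pair_inter hxy)).unique
    (by rw [Set.image_pair]; exact isGLB_pair_inter hexy)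

def OrderIso.restrict {α : Type*} [Preorder α] {s t s' t' : Set α} (e : s ≃o t) (hs : s' ⊆ s)
    (ht : t' ⊆ t) (h : ∀ x (hx : x ∈ s'), (e ⟨x, hs hx⟩ : α) ∈ t')
    (h' : ∀ y (hy : y ∈ t'), (e.symm ⟨y, ht hy⟩ : α) ∈ s') : s' ≃o t' where
  toFun x := ⟨e ⟨x, hs x.2⟩, h x x.2⟩
  invFun y := ⟨e.symm ⟨y, ht y.2⟩, h' y y.2⟩
  left_inv x := by simp
  right_inv y := by simp
  map_rel_iff' := e.le_iff_le

variable {T : Tiling d} {P P' : Set (EucSp d)} {j k : ℕ}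

lemma IsCenteredIso.symm {e : corona T k P ≃o corona T k P'} (he : IsCenteredIso T k P P' e) :
    IsCenteredIso T k P' P e.symm := fun hP' hP => by
  rw [← he hP hP', e.symm_apply_apply]

lemma mem_tiles_orderIso (e : corona T k P ≃o corona T k P') {x : corona T k P}
    (hx : (x : Set (EucSp d)) ∈ T.tiles) : (e x : Set (EucSp d)) ∈ T.tiles :=
  isMax_corona_iff.1 (e.isMax_apply.2 (isMax_corona_iff.2 hx))

lemma le_fdimZ_inter_orderIso (e : corona T k P ≃o corona T k P') {x y : corona T k P}
    (hx : (x : Set (EucSp d)) ∈ T.tiles) (hy : (y : Set (EucSp d)) ∈ T.tiles)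
    (hxy : (d : ℤ) - 2 ≤ fdimZ ((x : Set (EucSp d)) ∩ y)) :
    (d : ℤ) - 2 ≤ fdimZ ((e x : Set (EucSp d)) ∩ e y) := by
  have hex := mem_tiles_orderIso e hx
  have hey := mem_tiles_orderIso e hy
  have hxyc := inter_mem_corona hx y.2 hy
  have hexyc := inter_mem_corona hex (e y).2 hey
  rw [le_fdimZ_inter_iff hx hy hxyc] at hxy
  rw [le_fdimZ_inter_iff hex hey hexyc, ← e.map_inter_of_mem hxyc hexyc]
  rintro ⟨g₁, g₂, h₀₁, h₁₂, h₂⟩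
  exact hxy ⟨e.symm g₁, e.symm g₂, e.lt_symm_apply.2 h₀₁, e.symm.lt_iff_lt.2 h₁₂,
    e.symm_apply_lt.2 h₂⟩

lemma TileChain.map (e : corona T k P ≃o corona T k P') (he : IsCenteredIso T k P P' e)
    (hP' : P' ∈ T.tiles) :
    ∀ {m : ℕ} {Q : Set (EucSp d)} (hc : TileChain T P Q m) (hm : m ≤ k),
      TileChain T P' (e ⟨Q, hc.mem_corona hm⟩) m
  | 0, Q, hc, _ => by
    obtain ⟨hP, rfl⟩ := tileChain_zero_iff.1 hc
    rw [he _ (self_mem_corona hP')]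
    exact tileChain_zero_iff.2 ⟨hP', rfl⟩
  | m + 1, Q, hc, hm => by
    obtain ⟨R, hR, hQ, hRQ⟩ := tileChain_succ_iff.1 hc
    exact tileChain_succ_iff.2 ⟨_, TileChain.map e he hP' hR (by omega),
      mem_tiles_orderIso e (x := ⟨Q, _⟩) hQ,
      le_fdimZ_inter_orderIso e (x := ⟨R, _⟩) (y := ⟨Q, _⟩) hR.mem_tiles hQ hRQ⟩

lemma mem_corona_orderIso (e : corona T k P ≃o corona T k P') (he : IsCenteredIso T k P P' e)
    (hP' : P' ∈ T.tiles) (hjk : j ≤ k) {F : Set (EucSp d)} (hF : F ∈ corona T j P) :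
    (e ⟨F, corona_mono hjk hF⟩ : Set (EucSp d)) ∈ corona T j P' := by
  obtain ⟨Q, hQ, hdist, hFQ⟩ := hF
  obtain ⟨m, hmj, hc⟩ := tileDist_le_iff.1 hdist
  have heQ := mem_tiles_orderIso e (x := ⟨Q, hc.mem_corona (hmj.trans hjk)⟩) hQ
  obtain ⟨S, hS, -, heF⟩ := (e ⟨F, corona_mono hjk ⟨Q, hQ, hdist, hFQ⟩⟩).2
  exact ⟨_, heQ, tileDist_le_iff.2 ⟨m, hmj, hc.map e he hP' (hmj.trans hjk)⟩,
    T.isFaceOf_of_subset hS heF heQ (e.monotone (show (⟨F, _⟩ : corona T k P) ≤ ⟨Q, _⟩ from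
      hFQ.subset))⟩

lemma CoronasIsomorphic.of_le (hjk : j ≤ k) (hP : P ∈ T.tiles) (hP' : P' ∈ T.tiles)
    (h : CoronasIsomorphic T k P P') : CoronasIsomorphic T j P P' := by
  obtain ⟨e, he⟩ := h
  exact ⟨e.restrict (corona_mono hjk) (corona_mono hjk)
    (fun _ hF => mem_corona_orderIso e he hP' hjk hF)
    (fun _ hF => mem_corona_orderIso e.symm he.symm hP hjk hF),
    fun hPj hP'j => Subtype.ext
      (congrArg Subtype.val (he (corona_mono hjk hPj) (corona_mono hjk hP'j)) :)⟩

lemma coronasIsomorphic_equivalence (T : Tiling d) (k : ℕ) :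
    Equivalence fun Q Q' : T.tiles => CoronasIsomorphic T k Q Q' where
  refl _ := ⟨OrderIso.refl _, fun _ _ => rfl⟩
  symm := fun ⟨e, he⟩ => ⟨e.symm, he.symm⟩
  trans := fun {_ Q _} ⟨e, he⟩ ⟨f, hf⟩ => ⟨e.trans f, fun hP hR => by
    rw [OrderIso.trans_apply, he hP (self_mem_corona Q.2), hf _ hR]⟩

end CoronaIsomorphisms

lemma Equivalence.rel_of_refines_of_mk_quot_eq {α : Type*} {r s : α → α → Prop}
    (hr : Equivalence r) (hrs : ∀ a b, r a b → s a b)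
    (hfin : Cardinal.mk (Quot r) < Cardinal.aleph0)
    (hcard : Cardinal.mk (Quot s) = Cardinal.mk (Quot r)) {a b : α} (hab : s a b) : r a b := by
  have : Finite (Quot r) := Cardinal.mk_lt_aleph0_iff.1 hfin
  obtain ⟨ψ⟩ := Cardinal.eq.1 hcard
  have hsurj : Function.Surjective (Quot.factor r s hrs) :=
    Quot.ind fun a => ⟨Quot.mk r a, rfl⟩
  have hinj := (hsurj.bijective_of_nat_card_le (Nat.card_congr ψ).ge).1
  exact hr.eqvGen_iff.1 (Quot.eqvGen_exact (hinj (Quot.sound hab)))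

theorem coronasIsomorphic_iff_of_count_eq_general (d : ℕ) (T : Tiling d) (k : ℕ)
    (hfin : Ncount T k < Cardinal.aleph0) (heq : Ncount T (k - 1) = Ncount T k) :
    ∀ P ∈ T.tiles, ∀ P' ∈ T.tiles,
      (CoronasIsomorphic T k P P' ↔ CoronasIsomorphic T (k - 1) P P') := by
  intro P hP P' hP'
  have hrefines : ∀ Q Q' : T.tiles,
      CoronasIsomorphic T k Q Q' → CoronasIsomorphic T (k - 1) Q Q' :=
    fun Q Q' => CoronasIsomorphic.of_le (Nat.sub_le k 1) Q.2 Q'.2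
  exact ⟨hrefines ⟨P, hP⟩ ⟨P', hP'⟩,
    (coronasIsomorphic_equivalence T k).rel_of_refines_of_mk_quot_eq hrefines hfin heq
      (a := ⟨P, hP⟩) (b := ⟨P', hP'⟩)⟩

/-- If `N_{k-1}(T) = N_k(T) < ∞` for a positive integer `k`, then the centered `k`-th coronas
of two tiles are isomorphic if and only if their centered `(k-1)`-st coronas are isomorphic. -/
theorem coronasIsomorphic_iff_of_count_eq (d : ℕ) (T : Tiling d) (k : ℕ) (hk : 1 ≤ k)
    (hfin : Ncount T k < Cardinal.aleph0) (heq : Ncount T (k - 1) = Ncount T k) :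
    ∀ P ∈ T.tiles, ∀ P' ∈ T.tiles,
      (CoronasIsomorphic T k P P' ↔ CoronasIsomorphic T (k - 1) P P') :=
  coronasIsomorphic_iff_of_count_eq_general d T k hfin heq
end
end

section
/- Let T be a locally finite face-to-face tiling of Euclidean d-space ℝ^d by convex d-polytopes. Then any two tiles P and Q of T can be joined by a finite sequence P = P_0, P_1, …, P_n = Q of tiles of T such that P_{j−1} ∩ P_j is a (d−1)-dimensional face of both P_{j−1} and P_j for j = 1,…,n. In particular, the distance d(P,Q) is finite for any two tiles P, Q of T. -/
noncomputable section
open scoped Classical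

variable {d : ℕ}

/-!
Let `S = ⋃₀ T.lowDimMeets` be the union of all intersections of two distinct tiles that have
dimension at most `d - 2`. Two distinct tiles sharing a point outside `S` meet in a
`(d - 1)`-dimensional face. Fix an interior point `a` of `P`. By Baire, some interior point `b`
of `Q` avoids the countably many proper affine subspaces spanned by `a` and a piece of `S`, so the
segment `[a, b]` misses `S`. By local finiteness the tiles facet-reachable from `P` and the
remaining tiles have closed unions; these cover the segment and meet only in `S`, so the
connected segment lies in the first union, and `Q ∋ b` is facet-reachable from `P`.
-/

theorem Relation.ReflTransGen.exists_seq {α : Type*} {r : α → α → Prop} {a b : α}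
    (h : Relation.ReflTransGen r a b) :
    ∃ (n : ℕ) (f : ℕ → α), f 0 = a ∧ f n = b ∧ ∀ j < n, r (f j) (f (j + 1)) := by
  induction h using Relation.ReflTransGen.head_induction_on with
  | refl => exact ⟨0, fun _ => b, rfl, rfl, by simp⟩
  | head hac _ ih =>
    obtain ⟨n, f, hf0, hfn, hf⟩ := ih
    refine ⟨n + 1, fun | 0 => _ | j + 1 => f j, rfl, hfn, ?_⟩
    rintro (_ | j) hj
    · simpa [hf0] using hac
    · exact hf j (by omega)

theorem segment_disjoint_of_notMem_affineSpan_insert {E : Type*} [AddCommGroup E] [Module ℝ E]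
    {a c : E} {A : Set E} (ha : a ∉ A) (hc : c ∉ affineSpan ℝ (insert a A)) :
    Disjoint (segment ℝ a c) A := by
  rw [Set.disjoint_right]
  rintro x hxA ⟨s, t, hs, ht, hst, rfl⟩
  rcases ht.eq_or_lt with rfl | htpos
  · obtain rfl : s = 1 := by simpa using hst
    simp_all
  have hx : s • a + t • c ∈ affineSpan ℝ (insert a A) :=
    subset_affineSpan ℝ _ (Set.mem_insert_of_mem _ hxA)
  have ha' : a ∈ affineSpan ℝ (insert a A) := subset_affineSpan ℝ _ (Set.mem_insert _ _)
  obtain rfl : s = 1 - t := by linarith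
  apply hc
  convert AffineMap.lineMap_mem t⁻¹ ha' hx using 1
  rw [AffineMap.lineMap_apply_module]
  match_scalars
  · field_simp
  · field_simp
    ring

theorem IsOpen.exists_forall_notMem_of_countable {E : Type*} [NormedAddCommGroup E]
    [NormedSpace ℝ E] [FiniteDimensional ℝ E] {U : Set E} (hU : IsOpen U) (hUne : U.Nonempty)
    {𝒜 : Set (AffineSubspace ℝ E)} (h𝒜 : 𝒜.Countable) (hproper : ∀ A ∈ 𝒜, A ≠ ⊤) :
    ∃ c ∈ U, ∀ A ∈ 𝒜, c ∉ A := by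
  have hdense : Dense (⋂ A ∈ 𝒜, ((A : Set E)ᶜ)) := by
    refine dense_biInter_of_isOpen (fun A _ => A.closed_of_finiteDimensional.isOpen_compl) h𝒜
      fun A hA => interior_eq_empty_iff_dense_compl.1 <|
        Set.not_nonempty_iff_eq_empty.1 fun h => hproper A hA ?_
    rwa [A.convex.interior_nonempty_iff_affineSpan_eq_top, AffineSubspace.affineSpan_coe] at h
  obtain ⟨c, hcU, hc⟩ := hdense.inter_open_nonempty U hU hUne
  exact ⟨c, hcU, by simpa using hc⟩

theorem affineSpan_insert_ne_top_of_fdimZ_le {d : ℕ} (a : EucSp d) {A : Set (EucSp d)}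
    (hA : fdimZ A ≤ (d : ℤ) - 2) : affineSpan ℝ (insert a A) ≠ ⊤ := by
  intro htop
  have hrank : Module.finrank ℝ (vectorSpan ℝ (insert a A)) = d := by
    rw [← direction_affineSpan, htop, AffineSubspace.direction_top, finrank_top,
      finrank_euclideanSpace_fin]
  rcases A.eq_empty_or_nonempty with rfl | hne
  · simp only [fdimZ, if_true] at hA
    rw [LawfulSingleton.insert_empty_eq, vectorSpan_singleton, finrank_bot] at hrank
    omega
  · have := finrank_vectorSpan_insert_le_set ℝ A a
    rw [fdimZ, if_neg hne.ne_empty, direction_affineSpan] at hA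
    omega

namespace Tiling

variable {d : ℕ} (T : Tiling d)

def FacetAdjacent (R R' : Set (EucSp d)) : Prop :=
  R ∈ T.tiles ∧ R' ∈ T.tiles ∧ fdimZ (R ∩ R') = (d : ℤ) - 1

def lowDimMeets : Set (Set (EucSp d)) :=
  {A | ∃ R ∈ T.tiles, ∃ R' ∈ T.tiles, R ≠ R' ∧ A = R ∩ R' ∧ fdimZ A ≤ (d : ℤ) - 2}

variable {R R' : Set (EucSp d)}

theorem lowDimMeets_countable : T.lowDimMeets.Countable :=
  (T.countable.image2 T.countable (· ∩ ·)).mono fun _ ⟨_, hR, _, hR', _, hA, _⟩ =>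
    hA ▸ Set.mem_image2_of_mem hR hR'

theorem convex_of_mem (hR : R ∈ T.tiles) : Convex ℝ R := by
  obtain ⟨⟨s, rfl⟩, -⟩ := T.polytope R hR
  exact convex_convexHull ℝ _

theorem isClosed_of_mem (hR : R ∈ T.tiles) : IsClosed R := by
  obtain ⟨⟨s, rfl⟩, -⟩ := T.polytope R hR
  exact (s.finite_toSet.isCompact_convexHull ℝ).isClosed

theorem isClosed_sUnion_of_subset {𝒮 : Set (Set (EucSp d))} (h𝒮 : 𝒮 ⊆ T.tiles) :
    IsClosed (⋃₀ 𝒮) := by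
  have hlf : LocallyFinite fun R : 𝒮 => (R : Set (EucSp d)) := fun x => by
    obtain ⟨U, hU, hfin⟩ := T.locallyFinite x
    exact ⟨U, hU, (hfin.preimage Subtype.val_injective.injOn).subset
      fun R hR => ⟨h𝒮 R.2, hR⟩⟩
  rw [Set.sUnion_eq_iUnion]
  exact hlf.isClosed_iUnion fun R => T.isClosed_of_mem (h𝒮 R.2)

theorem eq_of_mem_interior_of_mem (hR : R ∈ T.tiles) (hR' : R' ∈ T.tiles) {x : EucSp d}
    (hxR : x ∈ interior R) (hxR' : x ∈ R') : R = R' := by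
  by_contra hne
  have hx : x ∈ closure (interior R') := by
    rw [(T.convex_of_mem hR').closure_interior_eq_closure_of_nonempty_interior
      (T.polytope R' hR').2]
    exact subset_closure hxR'
  obtain ⟨y, hy⟩ := mem_closure_iff.1 hx _ isOpen_interior hxR
  simp [T.disjointInteriors R hR R' hR' hne] at hy

theorem notMem_sUnion_lowDimMeets (hR : R ∈ T.tiles) {x : EucSp d} (hx : x ∈ interior R) :
    x ∉ ⋃₀ T.lowDimMeets := by
  rintro ⟨_, ⟨R₁, hR₁, R₂, hR₂, hne, rfl, -⟩, hx₁, hx₂⟩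
  exact hne ((T.eq_of_mem_interior_of_mem hR hR₁ hx hx₁).symm.trans
    (T.eq_of_mem_interior_of_mem hR hR₂ hx hx₂))

theorem fdimZ_inter_le (hR : R ∈ T.tiles) (hR' : R' ∈ T.tiles) (hne : R ≠ R') :
    fdimZ (R ∩ R') ≤ (d : ℤ) - 1 := by
  rcases (R ∩ R').eq_empty_or_nonempty with h | h
  · simp only [fdimZ, h, if_true]
    omega
  have hint : interior (R ∩ R') = ∅ := by
    rw [interior_inter, T.disjointInteriors R hR R' hR' hne]
  have hspan : affineSpan ℝ (R ∩ R') ≠ ⊤ := fun htop => by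
    have hconv := (T.convex_of_mem hR).inter (T.convex_of_mem hR')
    rw [← hconv.interior_nonempty_iff_affineSpan_eq_top, hint] at htop
    exact Set.not_nonempty_empty htop
  have hdir : (affineSpan ℝ (R ∩ R')).direction ≠ ⊤ := by
    rwa [Ne, AffineSubspace.direction_eq_top_iff_of_nonempty ((affineSpan_nonempty ℝ).2 h)]
  have := Submodule.finrank_lt hdir
  rw [finrank_euclideanSpace_fin] at this
  rw [fdimZ, if_neg h.ne_empty]
  omega

theorem facetAdjacent_of_mem_inter (hR : R ∈ T.tiles) (hR' : R' ∈ T.tiles) (hne : R ≠ R')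
    {x : EucSp d} (hx : x ∈ R ∩ R') (hxS : x ∉ ⋃₀ T.lowDimMeets) : T.FacetAdjacent R R' := by
  refine ⟨hR, hR', le_antisymm (T.fdimZ_inter_le hR hR' hne) ?_⟩
  by_contra! hlow
  exact hxS ⟨R ∩ R', ⟨R, hR, R', hR', hne, rfl, by omega⟩, hx⟩

variable {P Q : Set (EucSp d)}

theorem reflTransGen_facetAdjacent_of_isPreconnected {K : Set (EucSp d)} (hK : IsPreconnected K)
    (hKS : Disjoint K (⋃₀ T.lowDimMeets)) (hP : P ∈ T.tiles) (hQ : Q ∈ T.tiles) {x y : EucSp d}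
    (hxK : x ∈ K) (hxP : x ∈ P) (hyK : y ∈ K) (hyQ : y ∈ Q) :
    Relation.ReflTransGen T.FacetAdjacent P Q := by
  set reach := {R | R ∈ T.tiles ∧ Relation.ReflTransGen T.FacetAdjacent P R}
  set rest := {R | R ∈ T.tiles ∧ ¬ Relation.ReflTransGen T.FacetAdjacent P R}
  have hspread : ∀ z ∈ K, ∀ R ∈ reach, ∀ R' ∈ T.tiles, z ∈ R → z ∈ R' →
      Relation.ReflTransGen T.FacetAdjacent P R' := by
    rintro z hzK R ⟨hR, hPR⟩ R' hR' hzR hzR'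
    rcases eq_or_ne R R' with rfl | hne
    · exact hPR
    · exact hPR.tail (T.facetAdjacent_of_mem_inter hR hR' hne ⟨hzR, hzR'⟩
        (Set.disjoint_left.1 hKS hzK))
  have hcover : K ⊆ ⋃₀ reach ∪ ⋃₀ rest := fun z _ => by
    obtain ⟨R, hR, hzR⟩ := Set.mem_sUnion.1 (T.covers.symm ▸ Set.mem_univ z)
    by_cases hPR : Relation.ReflTransGen T.FacetAdjacent P R
    · exact Or.inl ⟨R, ⟨hR, hPR⟩, hzR⟩
    · exact Or.inr ⟨R, ⟨hR, hPR⟩, hzR⟩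
  have hKrest : ¬ (K ∩ ⋃₀ rest).Nonempty := fun hne => by
    obtain ⟨z, hzK, ⟨R, hR, hzR⟩, R', ⟨hR', hPR'⟩, hzR'⟩ :=
      isPreconnected_closed_iff.1 hK _ _ (T.isClosed_sUnion_of_subset fun _ h => h.1)
        (T.isClosed_sUnion_of_subset fun _ h => h.1) hcover ⟨x, hxK, P, ⟨hP, .refl⟩, hxP⟩ hne
    exact hPR' (hspread z hzK R hR R' hR' hzR hzR')
  obtain ⟨R, hR, hyR⟩ := (hcover hyK).resolve_right fun hy => hKrest ⟨y, hyK, hy⟩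
  exact hspread y hyK R hR Q hQ hyR hyQ

theorem reflTransGen_facetAdjacent (hP : P ∈ T.tiles) (hQ : Q ∈ T.tiles) :
    Relation.ReflTransGen T.FacetAdjacent P Q := by
  obtain ⟨a, ha⟩ := (T.polytope P hP).2
  obtain ⟨b, hb, hbA⟩ := isOpen_interior.exists_forall_notMem_of_countable (T.polytope Q hQ).2
    (T.lowDimMeets_countable.image fun A => affineSpan ℝ (insert a A))
    (by
      rintro _ ⟨A, ⟨_, _, _, _, _, _, hA⟩, rfl⟩
      exact affineSpan_insert_ne_top_of_fdimZ_le a hA)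
  have hseg : Disjoint (segment ℝ a b) (⋃₀ T.lowDimMeets) :=
    Set.disjoint_sUnion_right.2 fun A hA => segment_disjoint_of_notMem_affineSpan_insert
      (fun haA => T.notMem_sUnion_lowDimMeets hP ha ⟨A, hA, haA⟩) (hbA _ ⟨A, hA, rfl⟩)
  exact T.reflTransGen_facetAdjacent_of_isPreconnected (convex_segment a b).isPreconnected hseg
    hP hQ (left_mem_segment ℝ a b) (interior_subset ha) (right_mem_segment ℝ a b)
    (interior_subset hb)

theorem tileDist_ne_top_of_tileChain {n : ℕ} (h : TileChain T P Q n) : tileDist T P Q ≠ ⊤ :=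
  ne_top_of_le_ne_top (ENat.natCast_ne_top n) (sInf_le ⟨n, rfl, h⟩)

end Tiling

/-- Any two tiles of `T` can be joined by a finite sequence of tiles in which any two
consecutive tiles meet in a common `(d-1)`-dimensional face; in particular the distance
between any two tiles is finite. -/
theorem exists_facet_chain (d : ℕ) (T : Tiling d) (P Q : Set (EucSp d))
    (hP : P ∈ T.tiles) (hQ : Q ∈ T.tiles) :
    (∃ (n : ℕ) (f : ℕ → Set (EucSp d)), f 0 = P ∧ f n = Q ∧ (∀ j ≤ n, f j ∈ T.tiles) ∧
      ∀ j, 1 ≤ j → j ≤ n →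
        IsFaceOf (f (j - 1) ∩ f j) (f (j - 1)) ∧ IsFaceOf (f (j - 1) ∩ f j) (f j) ∧
        fdimZ (f (j - 1) ∩ f j) = (d : ℤ) - 1) ∧
    tileDist T P Q ≠ ⊤ := by
  obtain ⟨n, f, hf0, hfn, hadj⟩ := (T.reflTransGen_facetAdjacent hP hQ).exists_seq
  have hstep : ∀ j, 1 ≤ j → j ≤ n → T.FacetAdjacent (f (j - 1)) (f j) := fun j h1 hn => by
    simpa [Nat.sub_add_cancel h1] using hadj (j - 1) (by omega)
  have hmem : ∀ j ≤ n, f j ∈ T.tiles := fun j hj => by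
    rcases j with _ | j
    · exact hf0 ▸ hP
    · exact (hstep (j + 1) (by omega) hj).2.1
  refine ⟨⟨n, f, hf0, hfn, hmem, fun j h1 hn => ?_⟩,
    T.tileDist_ne_top_of_tileChain ⟨f, hf0, hfn, hmem, fun j h1 hn => ?_⟩⟩
  · obtain ⟨hR, hR', hdim⟩ := hstep j h1 hn
    exact ⟨(T.faceToFace _ hR _ hR').1, (T.faceToFace _ hR _ hR').2, hdim⟩
  · have := (hstep j h1 hn).2.2
    omega
end
end

section
/- Local Theorem for crystallographic tilings (necessity). Let T be a locally finite face-to-face tiling of Euclidean d-space ℝ^d by convex d-polytopes with only finitely many congruence classes of tiles. If T is periodic, then there exists a positive integer k such that: (1) M_{k−1}(T) = M_k(T); and (2) for every tile P of T, G_{k−1}(P) = G_k(P), i.e. every symmetry of the centered (k−1)-st tile corona of P is a symmetry of the centered k-th tile corona of P. -/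
noncomputable section
open scoped Classical

variable {d : ℕ}

/-- The `k`-th tile corona of `P`: the set of tiles at distance at most `k` from `P`. -/
def tileCorona (T : Tiling d) (k : ℕ) (P : Set (EucSp d)) : Set (Set (EucSp d)) :=
  {Q | Q ∈ T.tiles ∧ tileDist T P Q ≤ (k : ℕ∞)}

/-- The centered `k`-th tile coronas `(P, C_k(P))` and `(P', C_k(P'))` are pairwise congruent. -/
def CongruentCoronas (T : Tiling d) (k : ℕ) (P P' : Set (EucSp d)) : Prop :=
  ∃ α : EucSp d ≃ᵢ EucSp d, α '' P = P' ∧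
    (fun Q => α '' Q) '' tileCorona T k P = tileCorona T k P'

/-- `M_k(T)`: the number of pairwise congruence classes of centered `k`-th tile coronas. -/
def Mcount (T : Tiling d) (k : ℕ) : Cardinal :=
  Cardinal.mk (Quot (fun P Q : ↥T.tiles =>
    CongruentCoronas T k (P : Set (EucSp d)) (Q : Set (EucSp d))))

/-- `α` is a symmetry of the tiling `T`: an isometry of `ℝ^d` mapping `T` onto itself. -/
def IsSymmetryOf (T : Tiling d) (α : EucSp d ≃ᵢ EucSp d) : Prop :=
  (fun Q => α '' Q) '' T.tiles = T.tiles

/-- Two tiles are equivalent under the symmetry group `G(T)` of `T`. -/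
def GeomEquiv (T : Tiling d) (P Q : Set (EucSp d)) : Prop :=
  ∃ α : EucSp d ≃ᵢ EucSp d, IsSymmetryOf T α ∧ α '' P = Q

/-- The number of orbits of `G(T)` on the tiles of `T`. -/
def geomOrbitCount (T : Tiling d) : Cardinal :=
  Cardinal.mk (Quot (fun P Q : ↥T.tiles =>
    GeomEquiv T (P : Set (EucSp d)) (Q : Set (EucSp d))))

/-- `G_{k-1}(P) = G_k(P)`: every symmetry of the centered `(k-1)`-st tile corona of `P`
is a symmetry of the centered `k`-th tile corona of `P`. -/
def SymsExtend (T : Tiling d) (k : ℕ) (P : Set (EucSp d)) : Prop :=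
  ∀ α : EucSp d ≃ᵢ EucSp d, α '' P = P →
    (fun Q => α '' Q) '' tileCorona T (k - 1) P = tileCorona T (k - 1) P →
    (fun Q => α '' Q) '' tileCorona T k P = tileCorona T k P

/-!
A symmetry of `T` carries the centered coronas of a tile onto those of its image, so `M_k(T)`
is at most the number of orbits of `G(T)`; being nondecreasing in `k`, it is eventually constant.
For a single tile `P`, the groups `G_k(P)` form a decreasing chain inside `G(P)`, which is finite
because an isometry fixing a polytope permutes its extreme points and these span `ℝ^d`
affinely; so `G_k(P)` is eventually constant too. Conjugating by `G(T)` transports this from a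
tile to its whole orbit, and taking the largest threshold over finitely many orbit
representatives gives one `k` for all tiles.
-/

open Filter

theorem Cardinal.mk_quot_le_of_le {α : Type*} {r s : α → α → Prop}
    (h : ∀ a b, r a b → s a b) : Cardinal.mk (Quot s) ≤ Cardinal.mk (Quot r) :=
  Cardinal.mk_le_of_surjective (f := Quot.factor r s h) (Quot.ind fun a => ⟨Quot.mk r a, rfl⟩)

theorem Cardinal.finite_Iic {c : Cardinal} (hc : c < Cardinal.aleph0) : (Set.Iic c).Finite := by
  obtain ⟨m, rfl⟩ := Cardinal.lt_aleph0.mp hc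
  refine ((Set.finite_Iic m).image ((↑) : ℕ → Cardinal)).subset fun x hx => ?_
  obtain ⟨n, rfl⟩ := Cardinal.lt_aleph0.mp ((Set.mem_Iic.mp hx).trans_lt hc)
  exact ⟨n, Nat.cast_le.mp (Set.mem_Iic.mp hx), rfl⟩

theorem Monotone.eventuallyConst_of_finite_range {β : Type*} [PartialOrder β] {f : ℕ → β}
    (hf : Monotone f) (hfin : (Set.range f).Finite) : atTop.EventuallyConst f := by
  have : Finite (Set.range f) := hfin.to_subtype
  obtain ⟨N, hN⟩ := WellFoundedGT.monotone_chain_condition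
    ⟨Set.rangeFactorization f, fun _ _ hmn => hf hmn⟩
  exact eventuallyConst_atTop.mpr ⟨N, fun n hn => congrArg Subtype.val (hN n hn).symm⟩

theorem Antitone.eventuallyConst_of_finite_range {β : Type*} [PartialOrder β] {f : ℕ → β}
    (hf : Antitone f) (hfin : (Set.range f).Finite) : atTop.EventuallyConst f :=
  Monotone.eventuallyConst_of_finite_range (β := βᵒᵈ) hf.dual_right hfin

theorem AffineEquiv.image_extremePoints {𝕜 E F : Type*} [Ring 𝕜] [PartialOrder 𝕜]
    [IsOrderedRing 𝕜] [AddCommGroup E] [Module 𝕜 E] [AddCommGroup F] [Module 𝕜 F]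
    (f : E ≃ᵃ[𝕜] F) (s : Set E) :
    f '' Set.extremePoints 𝕜 s = Set.extremePoints 𝕜 (f '' s) := by
  ext b
  obtain ⟨a, rfl⟩ := f.surjective b
  have : ∀ x y, f '' openSegment 𝕜 x y = openSegment 𝕜 (f x) (f y) :=
    image_openSegment 𝕜 f.toAffineMap
  simp only [mem_extremePoints, f.surjective.forall, f.injective.mem_set_image,
    f.injective.eq_iff, ← this]

section RealNormedSpace

variable {E F : Type*} [NormedAddCommGroup E] [NormedSpace ℝ E] [NormedAddCommGroup F]
  [NormedSpace ℝ F]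

theorem IsometryEquiv.coe_toRealAffineEquiv (α : E ≃ᵢ F) :
    ⇑α.toRealAffineIsometryEquiv.toAffineEquiv = α :=
  α.coeFn_toRealAffineIsometryEquiv

theorem IsometryEquiv.ext_on {α β : E ≃ᵢ F} {s : Set E} (hs : affineSpan ℝ s = ⊤)
    (h : Set.EqOn α β s) : α = β := by
  have := AffineEquiv.ext_on hs α.toRealAffineIsometryEquiv.toAffineEquiv
    β.toRealAffineIsometryEquiv.toAffineEquiv (by simpa [IsometryEquiv.coe_toRealAffineEquiv])
  exact IsometryEquiv.ext fun x => by
    simpa [IsometryEquiv.coe_toRealAffineEquiv] using congrArg (· x) this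

end RealNormedSpace

theorem fdimZ_image (α : EucSp d ≃ᵢ EucSp d) (F : Set (EucSp d)) :
    fdimZ (α '' F) = fdimZ F := by
  set e := α.toRealAffineIsometryEquiv.toAffineEquiv
  have hspan : affineSpan ℝ (α '' F) = (affineSpan ℝ F).map e.toAffineMap := by
    rw [AffineSubspace.map_span, AffineEquiv.coe_toAffineMap, IsometryEquiv.coe_toRealAffineEquiv]
  simp only [fdimZ, Set.image_eq_empty]
  split_ifs
  · rfl
  · rw [hspan, AffineSubspace.map_direction, AffineEquiv.linear_toAffineMap,
      LinearEquiv.finrank_map_eq]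

namespace IsPolytope

variable {P : Set (EucSp d)}

theorem finite_extremePoints (hP : IsPolytope d P) : (Set.extremePoints ℝ P).Finite := by
  obtain ⟨⟨s, rfl⟩, -⟩ := hP
  exact s.finite_toSet.subset extremePoints_convexHull_subset

theorem affineSpan_extremePoints (hP : IsPolytope d P) :
    affineSpan ℝ (Set.extremePoints ℝ P) = ⊤ := by
  obtain ⟨⟨s, rfl⟩, hint⟩ := hP
  have hhull : convexHull ℝ (Set.extremePoints ℝ (convexHull ℝ (s : Set (EucSp d)))) =
      convexHull ℝ (s : Set (EucSp d)) := by
    rw [← ((finite_extremePoints ⟨⟨s, rfl⟩, hint⟩).isClosed_convexHull ℝ).closure_eq]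
    exact closure_convexHull_extremePoints (s.finite_toSet.isCompact_convexHull ℝ)
      (convex_convexHull ℝ _)
  rw [← interior_convexHull_nonempty_iff_affineSpan_eq_top, hhull]
  exact hint

theorem finite_symmetries (hP : IsPolytope d P) :
    {α : EucSp d ≃ᵢ EucSp d | α '' P = P}.Finite := by
  set E := Set.extremePoints ℝ P
  have : Finite E := hP.finite_extremePoints.to_subtype
  have hmaps : ∀ α : EucSp d ≃ᵢ EucSp d, α '' P = P → α '' E = E := fun α hα => by
    simpa [IsometryEquiv.coe_toRealAffineEquiv, hα] using
      α.toRealAffineIsometryEquiv.toAffineEquiv.image_extremePoints P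
  refine Set.Finite.of_finite_image (f := fun α (x : E) => α x)
    ((Set.Finite.pi fun _ => hP.finite_extremePoints).subset ?_) ?_
  · rintro _ ⟨α, hα, rfl⟩ x -
    exact (hmaps α hα).subset (Set.mem_image_of_mem α x.2)
  · intro α _ β _ hαβ
    exact IsometryEquiv.ext_on hP.affineSpan_extremePoints fun x hx => congrFun hαβ ⟨x, hx⟩

end IsPolytope

namespace IsometryEquiv

variable {X : Type*} [PseudoEMetricSpace X] (α β : X ≃ᵢ X) (S : Set (Set X))

theorem image_trans_sets :
    (fun Q => (α.trans β) '' Q) '' S = (fun Q => β '' Q) '' ((fun Q => α '' Q) '' S) := by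
  rw [Set.image_image]
  congr 1 with Q
  rw [Set.image_image]
  rfl

theorem symm_image_image_sets : (fun Q => α.symm '' Q) '' ((fun Q => α '' Q) '' S) = S := by
  simp [Set.image_image]

theorem image_trans (Q : Set X) : (α.trans β) '' Q = β '' (α '' Q) :=
  Set.image_comp β α Q

theorem symm_image_image (Q : Set X) : α.symm '' (α '' Q) = Q :=
  α.toEquiv.symm_image_image Q

end IsometryEquiv

section Coronas

variable {T : Tiling d} {P Q : Set (EucSp d)}

theorem tileDist_le_of_tileChain {m : ℕ} (h : TileChain T P Q m) : tileDist T P Q ≤ m :=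
  sInf_le ⟨m, rfl, h⟩

theorem exists_tileChain_of_tileDist_le {j : ℕ} (h : tileDist T P Q ≤ j) :
    ∃ m ≤ j, TileChain T P Q m := by
  set S := {n : ℕ∞ | ∃ m : ℕ, n = m ∧ TileChain T P Q m}
  have hS : S.Nonempty := by
    by_contra hS
    rw [Set.not_nonempty_iff_eq_empty] at hS
    simp [tileDist, S, hS] at h
  obtain ⟨m, hm, hchain⟩ := csInf_mem hS
  exact ⟨m, Nat.cast_le.mp (hm ▸ (show sInf S ≤ j from h)), hchain⟩

theorem tileCorona_mono {j k : ℕ} (hjk : j ≤ k) : tileCorona T j P ⊆ tileCorona T k P :=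
  fun _ hQ => ⟨hQ.1, hQ.2.trans (by exact_mod_cast hjk)⟩

/-- A chain of length at most `k` from `P` stays inside `C_k(P)`, so its image is again a
chain. -/
theorem tileDist_image_le (α : EucSp d ≃ᵢ EucSp d) {k j : ℕ}
    (hmap : ∀ R ∈ tileCorona T k P, α '' R ∈ T.tiles) (hjk : j ≤ k)
    (hQ : tileDist T P Q ≤ j) : tileDist T (α '' P) (α '' Q) ≤ j := by
  obtain ⟨m, hmj, f, hf0, hfm, htiles, hdim⟩ := exists_tileChain_of_tileDist_le hQ
  have hcorona : ∀ i ≤ m, f i ∈ tileCorona T k P := fun i hi => by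
    have hprefix : TileChain T P (f i) i :=
      ⟨f, hf0, rfl, fun l hl => htiles l (hl.trans hi), fun l h1 h2 => hdim l h1 (h2.trans hi)⟩
    refine ⟨htiles i hi, (tileDist_le_of_tileChain hprefix).trans ?_⟩
    exact_mod_cast (hi.trans hmj).trans hjk
  have hchain : TileChain T (α '' P) (α '' Q) m := by
    refine ⟨fun i => α '' f i, congrArg _ hf0, congrArg _ hfm, fun i hi => hmap _ (hcorona i hi),
      fun i h1 h2 => ?_⟩
    rw [← Set.image_inter α.injective, fdimZ_image]
    exact hdim i h1 h2
  exact (tileDist_le_of_tileChain hchain).trans (by exact_mod_cast hmj)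

theorem image_tileCorona_of_maps (α : EucSp d ≃ᵢ EucSp d) {k j : ℕ}
    (hmap : ∀ R ∈ tileCorona T k P, α '' R ∈ T.tiles)
    (hmap' : ∀ R ∈ tileCorona T k (α '' P), α.symm '' R ∈ T.tiles) (hjk : j ≤ k) :
    (fun Q => α '' Q) '' tileCorona T j P = tileCorona T j (α '' P) := by
  refine Set.Subset.antisymm ?_ fun R hR =>
    ⟨α.symm '' R, ⟨?_, ?_⟩, by simp [Set.image_image]⟩
  · rintro _ ⟨Q, hQ, rfl⟩
    exact ⟨hmap Q (tileCorona_mono hjk hQ), tileDist_image_le α hmap hjk hQ.2⟩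
  · exact hmap' R (tileCorona_mono hjk hR)
  · simpa [Set.image_image] using tileDist_image_le α.symm hmap' hjk hR.2

theorem image_tileCorona_of_le {α : EucSp d ≃ᵢ EucSp d} {k j : ℕ}
    (h : (fun Q => α '' Q) '' tileCorona T k P = tileCorona T k (α '' P)) (hjk : j ≤ k) :
    (fun Q => α '' Q) '' tileCorona T j P = tileCorona T j (α '' P) := by
  refine image_tileCorona_of_maps α (fun R hR => ?_) (fun R hR => ?_) hjk
  · exact (h ▸ Set.mem_image_of_mem _ hR : α '' R ∈ tileCorona T k (α '' P)).1
  · rw [← h] at hR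
    obtain ⟨R, hR, rfl⟩ := hR
    simpa [Set.image_image] using hR.1

theorem IsSymmetryOf.image_mem {α : EucSp d ≃ᵢ EucSp d} (hα : IsSymmetryOf T α)
    (hQ : Q ∈ T.tiles) : α '' Q ∈ T.tiles :=
  hα ▸ Set.mem_image_of_mem _ hQ

theorem isSymmetryOf_refl (T : Tiling d) : IsSymmetryOf T (.refl _) :=
  (Set.image_congr fun Q _ => Set.image_id Q).trans (Set.image_id' _)

theorem IsSymmetryOf.symm {α : EucSp d ≃ᵢ EucSp d} (hα : IsSymmetryOf T α) :
    IsSymmetryOf T α.symm :=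
  (congrArg _ hα).symm.trans (IsometryEquiv.symm_image_image_sets α T.tiles)

theorem IsSymmetryOf.trans {α β : EucSp d ≃ᵢ EucSp d} (hα : IsSymmetryOf T α)
    (hβ : IsSymmetryOf T β) : IsSymmetryOf T (α.trans β) := by
  unfold IsSymmetryOf at *
  rw [IsometryEquiv.image_trans_sets, hα, hβ]

theorem IsSymmetryOf.image_tileCorona {α : EucSp d ≃ᵢ EucSp d} (hα : IsSymmetryOf T α)
    (k : ℕ) : (fun Q => α '' Q) '' tileCorona T k P = tileCorona T k (α '' P) :=
  image_tileCorona_of_maps α (fun _ hR => hα.image_mem hR.1) (fun _ hR => hα.symm.image_mem hR.1)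
    le_rfl

theorem geomEquiv_equivalence (T : Tiling d) :
    Equivalence fun P Q : T.tiles => GeomEquiv T P Q where
  refl P := ⟨.refl _, isSymmetryOf_refl T, Set.image_id _⟩
  symm := fun ⟨α, hα, hPQ⟩ => ⟨α.symm, hα.symm, by simp [← hPQ, Set.image_image]⟩
  trans := fun ⟨α, hα, hPQ⟩ ⟨β, hβ, hQR⟩ =>
    ⟨α.trans β, hα.trans hβ, by rw [← hQR, ← hPQ, Set.image_image]; rfl⟩

end Coronas

/-- `G_k(P)`. -/
def coronaSymmetries (T : Tiling d) (k : ℕ) (P : Set (EucSp d)) : Set (EucSp d ≃ᵢ EucSp d) :=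
  {α | α '' P = P ∧ (fun Q => α '' Q) '' tileCorona T k P = tileCorona T k P}

section CoronaSymmetries

variable {T : Tiling d} {P : Set (EucSp d)}

theorem symsExtend_iff {k : ℕ} :
    SymsExtend T k P ↔ coronaSymmetries T (k - 1) P ⊆ coronaSymmetries T k P :=
  ⟨fun h α hα => ⟨hα.1, h α hα.1 hα.2⟩, fun h _ hP hC => (h ⟨hP, hC⟩).2⟩

theorem coronaSymmetries_antitone : Antitone fun k => coronaSymmetries T k P := by
  intro j k hjk α ⟨hP, hC⟩
  have h := image_tileCorona_of_le (j := j) (by rw [hP]; exact hC) hjk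
  rw [hP] at h
  exact ⟨hP, h⟩

theorem eventually_symsExtend (hP : P ∈ T.tiles) : ∀ᶠ k in atTop, SymsExtend T (k + 1) P := by
  have hfin : (Set.range fun k => coronaSymmetries T k P).Finite :=
    ((T.polytope P hP).finite_symmetries.finite_subsets).subset <| Set.range_subset_iff.mpr
      fun _ _ hα => hα.1
  obtain ⟨N, hN⟩ := eventuallyConst_atTop_nat.mp
    (coronaSymmetries_antitone.eventuallyConst_of_finite_range hfin)
  filter_upwards [eventually_ge_atTop N] with k hk
  exact symsExtend_iff.mpr (hN k hk).symm.subset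

theorem IsSymmetryOf.conj_mem_coronaSymmetries {β α : EucSp d ≃ᵢ EucSp d} {k : ℕ}
    (hβ : IsSymmetryOf T β) (hα : α ∈ coronaSymmetries T k P) :
    (β.symm.trans α).trans β ∈ coronaSymmetries T k (β '' P) := by
  constructor
  · rw [IsometryEquiv.image_trans, IsometryEquiv.image_trans, IsometryEquiv.symm_image_image,
      hα.1]
  · rw [← hβ.image_tileCorona, IsometryEquiv.image_trans_sets, IsometryEquiv.image_trans_sets,
      IsometryEquiv.symm_image_image_sets, hα.2]

theorem SymsExtend.image {k : ℕ} (h : SymsExtend T k P) {β : EucSp d ≃ᵢ EucSp d}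
    (hβ : IsSymmetryOf T β) : SymsExtend T k (β '' P) := by
  rw [symsExtend_iff] at h ⊢
  intro γ hγ
  have hγ' := hβ.symm.conj_mem_coronaSymmetries hγ
  rw [IsometryEquiv.symm_image_image] at hγ'
  convert hβ.conj_mem_coronaSymmetries (h hγ') using 1
  ext x
  simp

end CoronaSymmetries

theorem eventually_forall_mem_tiles {T : Tiling d} (h : geomOrbitCount T < Cardinal.aleph0)
    {p : ℕ → Set (EucSp d) → Prop}
    (hp : ∀ n P β, IsSymmetryOf T β → p n P → p n (β '' P))
    (hev : ∀ P ∈ T.tiles, ∀ᶠ n in atTop, p n P) :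
    ∀ᶠ n in atTop, ∀ P ∈ T.tiles, p n P := by
  let orbits := Quot fun P Q : T.tiles => GeomEquiv T P Q
  have : Finite orbits := Cardinal.lt_aleph0_iff_finite.mp h
  filter_upwards [eventually_all.mpr fun q : orbits => hev _ q.out.2] with n hn P hP
  obtain ⟨β, hβ, hβP⟩ := (geomEquiv_equivalence T).eqvGen_iff.mp
    (Quot.eqvGen_exact (Quot.out_eq (Quot.mk _ ⟨P, hP⟩)))
  simpa only [hβP] using hp n _ β hβ (hn (Quot.mk _ ⟨P, hP⟩))

theorem mcount_mono (T : Tiling d) : Monotone (Mcount T) := by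
  intro j k hjk
  refine Cardinal.mk_quot_le_of_le fun P Q ⟨α, hP, hC⟩ => ⟨α, hP, ?_⟩
  rw [← hP] at hC ⊢
  exact image_tileCorona_of_le hC hjk

theorem mcount_le_geomOrbitCount (T : Tiling d) (k : ℕ) : Mcount T k ≤ geomOrbitCount T :=
  Cardinal.mk_quot_le_of_le fun _ _ ⟨α, hα, hPQ⟩ =>
    ⟨α, hPQ, hPQ ▸ hα.image_tileCorona k⟩

theorem eventually_mcount_succ {T : Tiling d} (h : geomOrbitCount T < Cardinal.aleph0) :
    ∀ᶠ k in atTop, Mcount T (k + 1) = Mcount T k := by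
  have hfin : (Set.range (Mcount T)).Finite :=
    (Cardinal.finite_Iic h).subset (Set.range_subset_iff.mpr (mcount_le_geomOrbitCount T))
  exact eventually_atTop.mpr
    (eventuallyConst_atTop_nat.mp ((mcount_mono T).eventuallyConst_of_finite_range hfin))

theorem local_conditions_of_periodic_general (d : ℕ) (T : Tiling d)
    (h : geomOrbitCount T < Cardinal.aleph0) :
    ∃ k : ℕ, 1 ≤ k ∧ Mcount T (k - 1) = Mcount T k ∧
      ∀ P ∈ T.tiles, SymsExtend T k P := by
  have hsyms : ∀ᶠ k in atTop, ∀ P ∈ T.tiles, SymsExtend T (k + 1) P :=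
    eventually_forall_mem_tiles h (fun _ _ _ hβ hP => hP.image hβ)
      fun _ hP => eventually_symsExtend hP
  obtain ⟨k, hM, hS⟩ := ((eventually_mcount_succ h).and hsyms).exists
  exact ⟨k + 1, k.succ_pos, hM.symm, hS⟩

/-- Local Theorem for crystallographic tilings (necessity): if `T` has finitely many
congruence classes of tiles and is periodic, then for some positive `k`,
`M_{k-1}(T) = M_k(T)` and for every tile `P` every symmetry of the centered `(k-1)`-st tile
corona of `P` is a symmetry of the centered `k`-th tile corona of `P`. -/
theorem local_conditions_of_periodic (d : ℕ) (T : Tiling d)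
    (hfin : Mcount T 0 < Cardinal.aleph0)
    (h : geomOrbitCount T < Cardinal.aleph0) :
    ∃ k : ℕ, 1 ≤ k ∧ Mcount T (k - 1) = Mcount T k ∧
      ∀ P ∈ T.tiles, SymsExtend T k P :=
  local_conditions_of_periodic_general d T h

end
end
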